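/- arXiv:2510.20918 — 4 statements merged into one kernel-verified Lean document; each statement's English description precedes it below -/
import Mathlib

section
/- Let v : {0,…,b} → ℝ satisfy discrete strict concavity and the bounded-concavity condition Δ⁺v(q) - Δ⁻v(q) ≥ -1 for all q ∈ {1,…,b-1}. Suppose q₁, q₂ ∈ {1,…,b-1} satisfy Δ⁺v(q₁) ≤ c₁ ≤ Δ⁻v(q₁) and Δ⁺v(q₂) ≤ c₂ ≤ Δ⁻v(q₂) where c₂ - c₁ > 1. Then q₁ > q₂. -/
lemma diff_mono (b : ℕ) (v : ℕ → ℝ)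
    (hconc : ∀ q : ℕ, 1 ≤ q → q + 1 ≤ b → v (q + 1) + v (q - 1) < 2 * v q) :
    ∀ m n : ℕ, m ≤ n → n + 1 ≤ b → v (n + 1) - v n ≤ v (m + 1) - v m := by
  intro m n h hn
  induction n with
  | zero =>
    have : m = 0 := Nat.le_zero.mp h
    subst this; exact le_refl _
  | succ k ih =>
    rcases Nat.eq_or_lt_of_le h with rfl | h'
    · exact le_refl _
    · have h1 := hconc (k + 1) (by omega) hn
      have h2 := ih (by omega) (by omega)
      have hk : (k + 1 : ℕ) - 1 = k := by omega
      rw [hk] at h1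
      linarith

/-- For discrete strictly concave v with Δ⁺v - Δ⁻v ≥ -1, if q₁, q₂ are interior
    solutions of the discrete FOCs for virtual costs c₁, c₂ with c₂ - c₁ > 1,
    then q₁ > q₂. -/
theorem stmt_4 (b : ℕ) (v : ℕ → ℝ) (c₁ c₂ : ℝ)
    (hconc : ∀ q : ℕ, 1 ≤ q → q + 1 ≤ b → v (q + 1) + v (q - 1) < 2 * v q)
    (hbound : ∀ q : ℕ, 1 ≤ q → q + 1 ≤ b →
      (v (q + 1) - v q) - (v q - v (q - 1)) ≥ -1)
    (q₁ q₂ : ℕ) (hq₁l : 1 ≤ q₁) (hq₁u : q₁ + 1 ≤ b) (hq₂l : 1 ≤ q₂) (hq₂u : q₂ + 1 ≤ b)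
    (hfoc₁ : v (q₁ + 1) - v q₁ ≤ c₁ ∧ c₁ ≤ v q₁ - v (q₁ - 1))
    (hfoc₂ : v (q₂ + 1) - v q₂ ≤ c₂ ∧ c₂ ≤ v q₂ - v (q₂ - 1))
    (hc : c₂ - c₁ > 1) :
    q₁ > q₂ := by
  by_contra h
  push_neg at h
  rcases Nat.eq_or_lt_of_le h with rfl | h'
  · have := hbound q₁ hq₁l hq₁u
    linarith [hfoc₁.1, hfoc₂.2]
  · have hm := diff_mono b v hconc q₁ (q₂ - 1) (by omega) (by omega)
    have hk : q₂ - 1 + 1 = q₂ := by omega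
    rw [hk] at hm
    linarith [hfoc₁.1, hfoc₂.2]
end

section
/- In the two-type integer screening problem with θ₁ = 1 - 1/γ, θ₂ = 2 - 1/γ, γ > b: if (q₁,t₁,q₂,t₂) ∈ {0,…,b}⁴ maximizes p₁(v(q₁) - t₁) + p₂(v(q₂) - t₂) subject to IC₁₂ (t₁ - θ₁q₁ ≥ t₂ - θ₁q₂), PC₂ (t₂ - θ₂q₂ ≥ 0), and q₁ ≥ q₂, then the constraints bind up to rounding: t₂ = 2q₂ and t₁ = q₁ + q₂ + t₂ - 2q₂ = q₁ + q₂. -/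
/-- In the two-type integer screening problem, at an optimum of the relaxed
    problem (IC₁₂, PC₂, monotonicity), the constraints bind up to rounding:
    t₂ = 2q₂ and t₁ = q₁ + q₂. -/
theorem stmt_13 (γ b : ℕ) (hb : 0 < b) (hγb : b < γ)
    (θ₁ θ₂ : ℝ) (hθ₁ : θ₁ = 1 - 1 / (γ : ℝ)) (hθ₂ : θ₂ = 2 - 1 / (γ : ℝ))
    (v : ℕ → ℝ) (hv0 : v 0 = 0) (hvmono : ∀ q q' : ℕ, q < q' → q' ≤ b → v q < v q')
    (p₁ p₂ : ℝ) (hp₁ : 0 < p₁) (hp₂ : 0 < p₂) (hp : p₁ + p₂ = 1)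
    (q₁ t₁ q₂ t₂ : ℕ) (hq₁ : q₁ ≤ b) (ht₁ : t₁ ≤ b) (hq₂ : q₂ ≤ b) (ht₂ : t₂ ≤ b)
    (hIC12 : (t₁ : ℝ) - θ₁ * q₁ ≥ (t₂ : ℝ) - θ₁ * q₂)
    (hPC2 : (t₂ : ℝ) - θ₂ * q₂ ≥ 0)
    (hmono : q₂ ≤ q₁)
    (hopt : ∀ q₁' t₁' q₂' t₂' : ℕ, q₁' ≤ b → t₁' ≤ b → q₂' ≤ b → t₂' ≤ b →
      ((t₁' : ℝ) - θ₁ * q₁' ≥ (t₂' : ℝ) - θ₁ * q₂') →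
      ((t₂' : ℝ) - θ₂ * q₂' ≥ 0) →
      q₂' ≤ q₁' →
      p₁ * (v q₁' - t₁') + p₂ * (v q₂' - t₂') ≤
        p₁ * (v q₁ - t₁) + p₂ * (v q₂ - t₂)) :
    t₂ = 2 * q₂ ∧ t₁ = q₁ + q₂ := by
  have hγ0 : 0 < γ := lt_trans hb hγb
  have hgR : (0:ℝ) < γ := by exact_mod_cast hγ0
  have hbγ : (b:ℝ) < γ := by exact_mod_cast hγb
  have hq₂b : (q₂:ℝ) ≤ b := by exact_mod_cast hq₂
  have hq₁b : (q₁:ℝ) ≤ b := by exact_mod_cast hq₁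
  have hinv : (1 / (γ:ℝ)) * γ = 1 := by field_simp
  have hinvpos : 0 < 1 / (γ:ℝ) := by positivity
  -- small fraction bounds
  have hfrac2 : (1 / (γ:ℝ)) * q₂ < 1 := by
    have h2 : (1 / (γ:ℝ)) * q₂ ≤ (1 / (γ:ℝ)) * b := by
      have : (0:ℝ) ≤ q₂ := by positivity
      nlinarith
    nlinarith
  have hfrac1 : (1 / (γ:ℝ)) * (q₁ - q₂) < 1 := by
    have hq : (q₁:ℝ) - q₂ ≤ b := by
      have : (0:ℝ) ≤ q₂ := by positivity
      linarith
    nlinarith [hinvpos, mul_le_mul_of_nonneg_left hq (le_of_lt hinvpos)]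
  have hfrac1' : (0:ℝ) ≤ (1 / (γ:ℝ)) * (q₁ - q₂) := by
    have hq : (0:ℝ) ≤ (q₁:ℝ) - q₂ := by
      have : (q₂:ℝ) ≤ q₁ := by exact_mod_cast hmono
      linarith
    positivity
  have hq₂pos : (0:ℝ) ≤ (1 / (γ:ℝ)) * q₂ := by positivity
  -- Step 1: t₂ ≥ 2 q₂
  have h1 : 2 * q₂ ≤ t₂ := by
    by_contra hcon
    push_neg at hcon
    have hle : t₂ + 1 ≤ 2 * q₂ := hcon
    have hleR : (t₂:ℝ) + 1 ≤ 2 * q₂ := by exact_mod_cast hle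
    rw [hθ₂] at hPC2
    have hexp : (t₂:ℝ) - (2 - 1/(γ:ℝ)) * q₂ = (t₂:ℝ) - 2 * q₂ + (1/(γ:ℝ)) * q₂ := by
      ring
    rw [hexp] at hPC2
    linarith [hfrac2, hPC2, hleR]
  -- Step 2: t₂ = 2 q₂
  have h2 : t₂ = 2 * q₂ := by
    rcases eq_or_lt_of_le h1 with h | h
    · exact h.symm
    · exfalso
      have hle : 2 * q₂ ≤ b := le_trans (le_of_lt h) ht₂
      have hR : (2 * q₂ : ℝ) < t₂ := by exact_mod_cast h
      have hIC' : ((2 * q₂ : ℕ) : ℝ) - θ₁ * q₂ ≤ (t₁:ℝ) - θ₁ * q₁ := by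
        push_cast; linarith
      have hPC' : ((2 * q₂ : ℕ) : ℝ) - θ₂ * q₂ ≥ 0 := by
        push_cast [hθ₂]; linarith [hq₂pos]
      have hkey := hopt q₁ t₁ q₂ (2 * q₂) hq₁ ht₁ hq₂ hle hIC' hPC' hmono
      push_cast at hkey
      linarith [hkey, mul_pos hp₂ (sub_pos.2 hR)]
  -- Step 3: t₁ ≥ q₁ + q₂
  have hq21 : (q₂:ℝ) ≤ q₁ := by exact_mod_cast hmono
  have h3 : q₁ + q₂ ≤ t₁ := by
    by_contra hcon
    push_neg at hcon
    have hle : t₁ + 1 ≤ q₁ + q₂ := hcon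
    have hleR : (t₁:ℝ) + 1 ≤ (q₁:ℝ) + q₂ := by exact_mod_cast hle
    have ht2R : (t₂:ℝ) = 2 * q₂ := by exact_mod_cast h2
    rw [hθ₁, ht2R] at hIC12
    have hexp : (t₁:ℝ) - (1 - 1/(γ:ℝ)) * q₁ - (2 * q₂ - (1 - 1/(γ:ℝ)) * q₂)
        = (t₁:ℝ) - q₁ - q₂ + (1/(γ:ℝ)) * ((q₁:ℝ) - q₂) := by ring
    have h' : (t₁:ℝ) - q₁ - q₂ + (1/(γ:ℝ)) * ((q₁:ℝ) - q₂) ≥ 0 := by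
      rw [← hexp]; linarith [hIC12]
    linarith [hfrac1, h', hleR]
  -- Step 4: t₁ = q₁ + q₂
  have h4 : t₁ = q₁ + q₂ := by
    rcases eq_or_lt_of_le h3 with h | h
    · exact h.symm
    · exfalso
      have hle : q₁ + q₂ ≤ b := le_trans (le_of_lt h) ht₁
      have hR : ((q₁:ℝ) + q₂) < t₁ := by exact_mod_cast h
      have ht2R : (t₂:ℝ) = 2 * q₂ := by exact_mod_cast h2
      have hIC' : ((q₁ + q₂ : ℕ) : ℝ) - θ₁ * q₁ ≥ (t₂:ℝ) - θ₁ * q₂ := by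
        push_cast [hθ₁, ht2R]; linarith [hfrac1']
      have hkey := hopt q₁ (q₁ + q₂) q₂ t₂ hq₁ hle hq₂ ht₂ hIC' hPC2 hmono
      push_cast at hkey
      linarith [hkey, mul_pos hp₁ (sub_pos.2 hR)]
  exact ⟨h2, h4⟩
end

section
/- In the two-type integer screening problem with binding constraints substituted (t₂ = 2q₂, t₁ = q₁ + q₂), suppose v is discrete strictly concave with Δ⁺v(q) - Δ⁻v(q) ≥ -1, and suppose (q̂₁, q̂₂) satisfy the discrete first-order conditions Δ⁺v(q̂₁) ≤ 1 ≤ Δ⁻v(q̂₁) and Δ⁺v(q̂₂) ≤ 2 + p₁/p₂ ≤ Δ⁻v(q̂₂). Then q̂₁ > q̂₂. -/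
/-- With binding constraints substituted, discrete strict concavity, bounded
    concavity, and the discrete FOCs at virtual costs 1 and 2 + p₁/p₂ imply
    strict monotonicity q̂₁ > q̂₂. -/
theorem stmt_14 (b : ℕ) (v : ℕ → ℝ)
    (hconc : ∀ q : ℕ, 1 ≤ q → q + 1 ≤ b → v (q + 1) + v (q - 1) < 2 * v q)
    (hbound : ∀ q : ℕ, 1 ≤ q → q + 1 ≤ b →
      (v (q + 1) - v q) - (v q - v (q - 1)) ≥ -1)
    (p₁ p₂ : ℝ) (hp₁ : 0 < p₁) (hp₂ : 0 < p₂)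
    (q₁ q₂ : ℕ) (hq₁l : 1 ≤ q₁) (hq₁u : q₁ + 1 ≤ b) (hq₂l : 1 ≤ q₂) (hq₂u : q₂ + 1 ≤ b)
    (hfoc₁ : v (q₁ + 1) - v q₁ ≤ 1 ∧ 1 ≤ v q₁ - v (q₁ - 1))
    (hfoc₂ : v (q₂ + 1) - v q₂ ≤ 2 + p₁ / p₂ ∧ 2 + p₁ / p₂ ≤ v q₂ - v (q₂ - 1)) :
    q₁ > q₂ := by
  have hpp : 0 < p₁ / p₂ := div_pos hp₁ hp₂
  by_contra h
  push_neg at h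
  rcases eq_or_lt_of_le h with heq | hlt
  · subst heq
    have hb := hbound q₁ hq₁l hq₁u
    linarith [hfoc₁.1, hfoc₂.2]
  · have key : ∀ m, q₁ + 1 ≤ m → m ≤ b → v m - v (m - 1) ≤ v (q₁ + 1) - v q₁ := by
      intro m hm
      induction m, hm using Nat.le_induction with
      | base => intro _; simp
      | succ n hn ih =>
        intro hnb
        have h1 : v (n + 1) + v (n - 1) < 2 * v n := hconc n (by omega) (by omega)
        have h2 := ih (by omega)
        have hs : n + 1 - 1 = n := by omega
        rw [hs]
        linarith
    have hk := key q₂ hlt (by omega)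
    linarith [hfoc₁.1, hfoc₂.2]
end

section
/- Let v be discrete strictly concave with Δ⁺v(q) - Δ⁻v(q) ≥ -1 for all interior q, and let c₁, c₂ be reals with c₂ > c₁. If q₁ satisfies Δ⁺v(q₁) ≤ c₁ ≤ Δ⁻v(q₁) and q₂ satisfies Δ⁺v(q₂) ≤ c₂ ≤ Δ⁻v(q₂), then q₁ ≥ q₂; moreover, if c₂ - c₁ > 1 then q₁ > q₂. -/
/-- For discrete strictly concave v with Δ⁺v - Δ⁻v ≥ -1: solutions of the
    discrete FOCs are weakly monotone in the virtual cost (c₂ > c₁ implies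
    q₁ ≥ q₂), and strictly so whenever c₂ - c₁ > 1. -/
theorem stmt_15 (b : ℕ) (v : ℕ → ℝ) (c₁ c₂ : ℝ)
    (hconc : ∀ q : ℕ, 1 ≤ q → q + 1 ≤ b → v (q + 1) + v (q - 1) < 2 * v q)
    (hbound : ∀ q : ℕ, 1 ≤ q → q + 1 ≤ b →
      (v (q + 1) - v q) - (v q - v (q - 1)) ≥ -1)
    (hc : c₁ < c₂)
    (q₁ q₂ : ℕ) (hq₁l : 1 ≤ q₁) (hq₁u : q₁ + 1 ≤ b) (hq₂l : 1 ≤ q₂) (hq₂u : q₂ + 1 ≤ b)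
    (hfoc₁ : v (q₁ + 1) - v q₁ ≤ c₁ ∧ c₁ ≤ v q₁ - v (q₁ - 1))
    (hfoc₂ : v (q₂ + 1) - v q₂ ≤ c₂ ∧ c₂ ≤ v q₂ - v (q₂ - 1)) :
    q₁ ≥ q₂ ∧ (c₂ - c₁ > 1 → q₁ > q₂) := by
  obtain ⟨h1a, h1b⟩ := hfoc₁
  obtain ⟨h2a, h2b⟩ := hfoc₂
  have key : ∀ m n : ℕ, m ≤ n → n + 1 ≤ b →
      v (n + 1) - v n ≤ v (m + 1) - v m := by
    intro m n hmn hnb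
    induction n with
    | zero =>
      have : m = 0 := Nat.le_zero.mp hmn
      subst this; exact le_refl _
    | succ k ih =>
      rcases Nat.eq_or_lt_of_le hmn with h | h
      · subst h; exact le_refl _
      · have hmk : m ≤ k := Nat.lt_succ_iff.mp h
        have hkb : k + 1 ≤ b := le_trans (Nat.le_succ _) hnb
        have hh := hconc (k + 1) (Nat.le_add_left 1 k) hnb
        simp only [Nat.add_sub_cancel] at hh
        have : v (k + 1 + 1) - v (k + 1) ≤ v (k + 1) - v k := by linarith
        exact le_trans this (ih hmk hkb)
  have hge : q₂ ≤ q₁ := by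
    by_contra hlt
    push_neg at hlt
    have hr : q₁ ≤ q₂ - 1 := Nat.le_sub_one_of_lt hlt
    have hq2 : q₂ - 1 + 1 = q₂ := Nat.succ_pred_eq_of_pos hq₂l
    have hk := key q₁ (q₂ - 1) hr (by omega)
    rw [hq2] at hk
    linarith
  refine ⟨hge, fun hgap => ?_⟩
  by_contra hle
  push_neg at hle
  have heq : q₁ = q₂ := le_antisymm hle hge
  subst heq
  have hb := hbound q₁ hq₁l hq₁u
  linarith
end
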